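/- Aperiodicity lifts through ideals: let S be finite, T an ideal of S, and J a J-class directly above T. If f^n = f^{n+1} for every f in Cayley(S,T) and g^l = g^{l+1} for every g in Cayley(S,J^tr), then h^{n+l} = h^{n+l+1} for every h in Cayley(S, T ∪ J). -/

import Mathlib

open Classical in
/-- φ_s([a_1,...,a_n]) = [s a_1, s a_1 a_2, ..., s a_1 ⋯ a_n] -/
def phi {S : Type*} [Mul S] (s : S) (l : List S) : List S :=
  (l.scanl (· * ·) s).tail

open Classical in
/-- The restriction of φ_s to words over a subset I of S (when I is an ideal,
φ_s maps words over I to words over I, so the `dite` always takes the first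
branch). -/
noncomputable def resPhi {S : Type*} [Semigroup S] (I : Set S) (s : S) :
    Function.End {l : List S // ∀ x ∈ l, x ∈ I} :=
  fun w => if h : ∀ x ∈ phi s w.1, x ∈ I then ⟨phi s w.1, h⟩ else w

/-- Cayley(S, I): the semigroup of functions on words over I generated by the
restrictions of the maps φ_s, s ∈ S. -/
noncomputable def CayleyOn {S : Type*} [Semigroup S] (I : Set S) :
    Subsemigroup (Function.End {l : List S // ∀ x ∈ l, x ∈ I}) :=
  Subsemigroup.closure {f | ∃ s : S, f = resPhi I s}

/-- Green's J-relation (in a monoid, so that S¹ = S). -/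
def jrel {S : Type*} [Monoid S] (x y : S) : Prop :=
  (∃ a b : S, a * x * b = y) ∧ (∃ a b : S, a * y * b = x)

open Classical in
/-- Multiplication in the trace J^tr = J ∪ {0}: products falling outside J are
sent to 0 (`none`). -/
noncomputable def trMul {S : Type*} [Monoid S] (J : Set S) :
    Option J → Option J → Option J
  | some x, some y => if h : (x : S) * y ∈ J then some ⟨x * y, h⟩ else none
  | _, _ => none

open Classical in
/-- The left action of s ∈ S on the trace J^tr. -/
noncomputable def trAct {S : Type*} [Monoid S] (J : Set S) (s : S) :
    Option J → Option J
  | some x => if h : s * x ∈ J then some ⟨s * x, h⟩ else none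
  | none => none

/-- φ_s acting on words over the trace J^tr:
φ_s([j₁,...,jₙ]) = [s̄j₁, s̄j₁j₂, ..., s̄j₁⋯jₙ] computed in J^tr. -/
noncomputable def phiTr {S : Type*} [Monoid S] (J : Set S) (s : S) :
    Function.End (List (Option J)) :=
  fun l =>
    match l with
    | [] => []
    | j :: rest => List.scanl (trMul J) (trAct J s j) rest

/-- Cayley(S, J^tr): the semigroup of functions on words over J^tr generated by
the maps φ_s, s ∈ S. -/
noncomputable def CayleyTr {S : Type*} [Monoid S] (J : Set S) :
    Subsemigroup (Function.End (List (Option J))) :=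
  Subsemigroup.closure {f | ∃ s : S, f = phiTr J s}


/-!
Everything is transported to `Cayley S`, generated by the maps `φ_s` on all words, of which each
`CayleyOn I` is a restriction. For `F ∈ Cayley S`, a word over `T ∪ J` in the image of `F` is a word
`u` over `J` followed by a word `v` over `T`, and `F (u ++ v) = F u ++ F' v` with `F' ∈ Cayley S`.
Read in the trace `J^tr`, `F` becomes some `G ∈ Cayley(S, J^tr)`; as `G ^ l = G ^ (l + 1)` and the
trace determines the `J`-prefix, `F` fixes the prefix `u` of `(F ^ l) w` for every word `w` over
`T ∪ J`. From then on `F` only acts on the `T`-suffix, through `F'`, which is stable after `n`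
further steps. When `l = 0`, the nonempty ideal `T` forces `J = ∅`.
-/

theorem map_pow_apply_of_eqOn {α β : Type*} {F : Function.End α} {G : Function.End β}
    {p : α → β} {A : Set α} (hF : Set.MapsTo F A A) (h : Set.EqOn (p ∘ F) (G ∘ p) A) (m : ℕ)
    {x : α} (hx : x ∈ A) : p ((F ^ m) x) = (G ^ m) (p x) := by
  induction m generalizing x with
  | zero => rfl
  | succ m ih =>
    change p (F^[m] (F x)) = G^[m] (G (p x))
    rw [← show p (F x) = G (p x) from h hx]
    exact ih (hF hx)

theorem val_pow_apply {α : Type*} {P : α → Prop} {f : Function.End (Subtype P)}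
    {F : Function.End α} (h : ∀ x, (f x).1 = F x.1) (m : ℕ) (x : Subtype P) :
    ((f ^ m) x).1 = (F ^ m) x.1 :=
  map_pow_apply_of_eqOn (Set.mapsTo_univ f _) (fun x _ => h x) m (Set.mem_univ x)

section

variable {S : Type*}

def wordsOver (I : Set S) : Set (List S) := {w | ∀ x ∈ w, x ∈ I}

open Classical in
noncomputable def toTr (J : Set S) (a : S) : Option J :=
  if h : a ∈ J then some ⟨a, h⟩ else none

noncomputable def traceWord (J : Set S) (w : List S) : List (Option J) :=
  w.map (toTr J)

theorem toTr_of_mem {J : Set S} {a : S} (ha : a ∈ J) : toTr J a = some ⟨a, ha⟩ := dif_pos ha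

theorem toTr_of_notMem {J : Set S} {a : S} (ha : a ∉ J) : toTr J a = none := dif_neg ha

theorem eq_of_toTr_eq {J : Set S} {a b : S} (h : toTr J a = toTr J b) (hb : b ∈ J) : a = b := by
  by_cases ha : a ∈ J
  · simpa [toTr_of_mem ha, toTr_of_mem hb] using h
  · simp [toTr_of_notMem ha, toTr_of_mem hb] at h

theorem eq_of_traceWord_eq {J : Set S} {x y : List S} (h : traceWord J x = traceWord J y)
    (hy : y ∈ wordsOver J) : x = y := by
  induction x generalizing y with
  | nil => simpa [traceWord, eq_comm] using h
  | cons a x ih =>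
    cases y with
    | nil => simp [traceWord] at h
    | cons b y =>
      simp only [traceWord, List.map_cons, List.cons.injEq] at h
      obtain ⟨hb, hy⟩ := List.forall_mem_cons.1 hy
      rw [eq_of_toTr_eq h.1 hb, ih h.2 hy]

variable [Monoid S]

@[simp]
theorem phi_nil (s : S) : phi s [] = [] := rfl

theorem phi_cons (s a : S) (w : List S) : phi s (a :: w) = s * a :: phi (s * a) w := by
  cases w <;> simp [phi, List.scanl_cons]

@[simp]
theorem length_phi (s : S) (w : List S) : (phi s w).length = w.length := by
  induction w generalizing s with
  | nil => rfl
  | cons a w ih => simp [phi_cons, ih]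

theorem phi_append (s : S) (u v : List S) :
    phi s (u ++ v) = phi s u ++ phi (s * u.prod) v := by
  induction u generalizing s with
  | nil => simp
  | cons a u ih => simp [phi_cons, ih, mul_assoc]

theorem phi_mem_wordsOver_of_mem {I : Set S} (hI : ∀ x ∈ I, ∀ s : S, x * s ∈ I) {c : S}
    (hc : c ∈ I) (w : List S) : phi c w ∈ wordsOver I := by
  induction w generalizing c with
  | nil => simp [wordsOver]
  | cons a w ih =>
    rw [phi_cons]
    exact List.forall_mem_cons.2 ⟨hI c hc a, ih (hI c hc a)⟩

theorem phi_mem_wordsOver {I : Set S} (hI : ∀ x ∈ I, ∀ s : S, s * x ∈ I ∧ x * s ∈ I) (s : S)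
    {w : List S} (hw : w ∈ wordsOver I) : phi s w ∈ wordsOver I := by
  cases w with
  | nil => simp [wordsOver]
  | cons a w =>
    have ha : s * a ∈ I := (hI a (hw a List.mem_cons_self) s).1
    rw [phi_cons]
    exact List.forall_mem_cons.2 ⟨ha, phi_mem_wordsOver_of_mem (fun x hx t => (hI x hx t).2) ha w⟩

theorem resPhi_val {I : Set S} (hI : ∀ x ∈ I, ∀ s : S, s * x ∈ I ∧ x * s ∈ I) (s : S)
    (w : {w : List S // ∀ x ∈ w, x ∈ I}) : (resPhi I s w).1 = phi s w.1 := by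
  have h : ∀ x ∈ phi s w.1, x ∈ I := phi_mem_wordsOver hI s w.2
  rw [resPhi, dif_pos h]

variable (S) in
/-- `Cayley(S)` acting on all words; `CayleyOn I` is its restriction to words over `I`. -/
def Cayley : Subsemigroup (Function.End (List S)) :=
  Subsemigroup.closure (Set.range phi)

namespace Cayley

variable {F : Function.End (List S)}

theorem mapsTo_wordsOver {I : Set S} (hI : ∀ x ∈ I, ∀ s : S, s * x ∈ I ∧ x * s ∈ I)
    (hF : F ∈ Cayley S) : Set.MapsTo F (wordsOver I) (wordsOver I) := by
  induction hF using Subsemigroup.closure_induction with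
  | mem F hF =>
    obtain ⟨s, rfl⟩ := hF
    exact fun w hw => phi_mem_wordsOver hI s hw
  | mul F G _ _ hF hG => exact hF.comp hG

theorem length_apply (hF : F ∈ Cayley S) (w : List S) : (F w).length = w.length := by
  induction hF using Subsemigroup.closure_induction generalizing w with
  | mem F hF =>
    obtain ⟨s, rfl⟩ := hF
    exact length_phi s w
  | mul F G _ _ hF hG => exact (hF (G w)).trans (hG w)

theorem exists_apply_append (hF : F ∈ Cayley S) (u : List S) :
    ∃ F' ∈ Cayley S, ∀ v, F (u ++ v) = F u ++ F' v := by
  induction hF using Subsemigroup.closure_induction generalizing u with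
  | mem F hF =>
    obtain ⟨s, rfl⟩ := hF
    exact ⟨phi (s * u.prod), Subsemigroup.subset_closure ⟨_, rfl⟩, phi_append s u⟩
  | mul F G _ _ hF hG =>
    obtain ⟨G', hG', hGu⟩ := hG u
    obtain ⟨F', hF', hFu⟩ := hF (G u)
    exact ⟨F' * G', mul_mem hF' hG', fun v => (congrArg F (hGu v)).trans (hFu (G' v))⟩

theorem exists_cayleyOn {I : Set S} (hI : ∀ x ∈ I, ∀ s : S, s * x ∈ I ∧ x * s ∈ I)
    (hF : F ∈ Cayley S) : ∃ f ∈ CayleyOn I, ∀ w, (f w).1 = F w.1 := by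
  induction hF using Subsemigroup.closure_induction with
  | mem F hF =>
    obtain ⟨s, rfl⟩ := hF
    exact ⟨resPhi I s, Subsemigroup.subset_closure ⟨s, rfl⟩, resPhi_val hI s⟩
  | mul F G _ _ hF hG =>
    obtain ⟨f, hf, hfF⟩ := hF
    obtain ⟨g, hg, hgG⟩ := hG
    exact ⟨f * g, mul_mem hf hg, fun w => (hfF (g w)).trans (congrArg F (hgG w))⟩

end Cayley

theorem exists_cayley_of_mem_cayleyOn {I : Set S}
    (hI : ∀ x ∈ I, ∀ s : S, s * x ∈ I ∧ x * s ∈ I) {f : Function.End {w : List S // ∀ x ∈ w, x ∈ I}}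
    (hf : f ∈ CayleyOn I) : ∃ F ∈ Cayley S, ∀ w, (f w).1 = F w.1 := by
  induction hf using Subsemigroup.closure_induction with
  | mem f hf =>
    obtain ⟨s, rfl⟩ := hf
    exact ⟨phi s, Subsemigroup.subset_closure ⟨s, rfl⟩, resPhi_val hI s⟩
  | mul f g _ _ hf hg =>
    obtain ⟨F, hF, hfF⟩ := hf
    obtain ⟨G, hG, hgG⟩ := hg
    exact ⟨F * G, mul_mem hF hG, fun w => (hfF (g w)).trans (congrArg F (hgG w))⟩

section Split

variable {T J : Set S} (hT : ∀ x ∈ T, ∀ s : S, s * x ∈ T ∧ x * s ∈ T)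
  (hTJ : ∀ x ∈ T ∪ J, ∀ s : S, s * x ∈ T ∪ J ∧ x * s ∈ T ∪ J)
include hT hTJ

/-- Once a prefix product leaves `J` it falls into the ideal `T` and stays there. -/
theorem phi_eq_append (s : S) {w : List S} (hw : w ∈ wordsOver (T ∪ J)) :
    ∃ u ∈ wordsOver J, ∃ v ∈ wordsOver T, phi s w = u ++ v := by
  induction w generalizing s with
  | nil => exact ⟨[], by simp [wordsOver], [], by simp [wordsOver], rfl⟩
  | cons a w ih =>
    obtain ⟨ha, hw⟩ := List.forall_mem_cons.1 hw
    rw [phi_cons]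
    rcases (hTJ a ha s).1 with hsa | hsa
    · refine ⟨[], by simp [wordsOver], _, List.forall_mem_cons.2 ⟨hsa, ?_⟩, rfl⟩
      exact phi_mem_wordsOver_of_mem (fun x hx t => (hT x hx t).2) hsa w
    · obtain ⟨u, hu, v, hv, huv⟩ := ih (s * a) hw
      exact ⟨s * a :: u, List.forall_mem_cons.2 ⟨hsa, hu⟩, v, hv, by rw [huv, List.cons_append]⟩

theorem Cayley.exists_apply_eq_append {F : Function.End (List S)} (hF : F ∈ Cayley S)
    {w : List S} (hw : w ∈ wordsOver (T ∪ J)) :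
    ∃ u ∈ wordsOver J, ∃ v ∈ wordsOver T, F w = u ++ v := by
  induction hF using Subsemigroup.closure_induction generalizing w with
  | mem F hF =>
    obtain ⟨s, rfl⟩ := hF
    exact phi_eq_append hT hTJ s hw
  | mul F G _ hG hF _ => exact hF (Cayley.mapsTo_wordsOver hTJ hG hw)

end Split

section Trace

variable {T J : Set S} (hT : ∀ x ∈ T, ∀ s : S, s * x ∈ T ∧ x * s ∈ T) (hdisj : Disjoint J T)
include hT hdisj

theorem toTr_mul_of_notMem {c a : S} (h : c ∉ J ∨ a ∉ J) (hc : c ∈ T ∪ J) (ha : a ∈ T ∪ J) :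
    toTr J (c * a) = none := by
  refine toTr_of_notMem (Set.disjoint_right.1 hdisj ?_)
  rcases h with h | h
  · exact (hT c (hc.resolve_right h) a).2
  · exact (hT a (ha.resolve_right h) c).1

theorem trMul_toTr {c a : S} (hc : c ∈ T ∪ J) (ha : a ∈ T ∪ J) :
    trMul J (toTr J c) (toTr J a) = toTr J (c * a) := by
  by_cases hcJ : c ∈ J
  · by_cases haJ : a ∈ J
    · rw [toTr_of_mem hcJ, toTr_of_mem haJ]
      rfl
    · rw [toTr_of_notMem haJ, toTr_mul_of_notMem hT hdisj (.inr haJ) hc ha]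
      cases toTr J c <;> rfl
  · rw [toTr_of_notMem hcJ, toTr_mul_of_notMem hT hdisj (.inl hcJ) hc ha]
    rfl

theorem trAct_toTr (s : S) {a : S} (ha : a ∈ T ∪ J) : trAct J s (toTr J a) = toTr J (s * a) := by
  by_cases haJ : a ∈ J
  · rw [toTr_of_mem haJ]
    rfl
  · rw [toTr_of_notMem haJ, toTr_of_notMem (Set.disjoint_right.1 hdisj
      (hT a (ha.resolve_right haJ) s).1)]
    rfl

variable (hTJ : ∀ x ∈ T ∪ J, ∀ s : S, s * x ∈ T ∪ J ∧ x * s ∈ T ∪ J)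
include hTJ

theorem scanl_trMul_traceWord {c : S} (hc : c ∈ T ∪ J) {w : List S}
    (hw : w ∈ wordsOver (T ∪ J)) :
    (traceWord J w).scanl (trMul J) (toTr J c) = traceWord J (w.scanl (· * ·) c) := by
  induction w generalizing c with
  | nil => rfl
  | cons a w ih =>
    obtain ⟨ha, hw⟩ := List.forall_mem_cons.1 hw
    simp only [traceWord, List.map_cons, List.scanl_cons] at ih ⊢
    rw [trMul_toTr hT hdisj hc ha, ih (hTJ c hc a).2 hw]

theorem phiTr_traceWord (s : S) {w : List S} (hw : w ∈ wordsOver (T ∪ J)) :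
    phiTr J s (traceWord J w) = traceWord J (phi s w) := by
  cases w with
  | nil => rfl
  | cons a w =>
    obtain ⟨ha, hw⟩ := List.forall_mem_cons.1 hw
    change (traceWord J w).scanl (trMul J) (trAct J s (toTr J a)) = _
    rw [trAct_toTr hT hdisj s ha, scanl_trMul_traceWord hT hdisj hTJ (hTJ a ha s).1 hw, phi,
      List.scanl_cons, List.tail_cons]

theorem Cayley.exists_cayleyTr {F : Function.End (List S)} (hF : F ∈ Cayley S) :
    ∃ G ∈ CayleyTr J, Set.EqOn (traceWord J ∘ F) (G ∘ traceWord J) (wordsOver (T ∪ J)) := by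
  induction hF using Subsemigroup.closure_induction with
  | mem F hF =>
    obtain ⟨s, rfl⟩ := hF
    exact ⟨phiTr J s, Subsemigroup.subset_closure ⟨s, rfl⟩,
      fun w hw => (phiTr_traceWord hT hdisj hTJ s hw).symm⟩
  | mul F G _ hG hF' hG' =>
    obtain ⟨F', hF', hFF'⟩ := hF'
    obtain ⟨G', hG', hGG'⟩ := hG'
    exact ⟨F' * G', mul_mem hF' hG', fun w hw =>
      (hFF' (Cayley.mapsTo_wordsOver hTJ hG hw)).trans (congrArg F' (hGG' hw))⟩

end Trace

section Lift

variable {T J : Set S} (hT : ∀ x ∈ T, ∀ s : S, s * x ∈ T ∧ x * s ∈ T) (hdisj : Disjoint J T)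
include hT hdisj

theorem eq_empty_of_forall_cayleyTr_eq_one (hTne : T.Nonempty) (h : ∀ g ∈ CayleyTr J, g = 1) :
    J = ∅ := by
  obtain ⟨t, ht⟩ := hTne
  refine Set.eq_empty_of_forall_notMem fun a ha => ?_
  have hfix : phiTr J t [some ⟨a, ha⟩] = [some ⟨a, ha⟩] := by
    rw [h _ (Subsemigroup.subset_closure ⟨t, rfl⟩)]
    rfl
  have hzero : phiTr J t [some ⟨a, ha⟩] = [none] := by
    change [trAct J t (some ⟨a, ha⟩)] = _
    rw [trAct, dif_neg (Set.disjoint_right.1 hdisj (hT t ht a).2)]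
  simp [hfix] at hzero

variable (hTJ : ∀ x ∈ T ∪ J, ∀ s : S, s * x ∈ T ∪ J ∧ x * s ∈ T ∪ J) {F : Function.End (List S)}
  {l : ℕ}
include hTJ

theorem Cayley.exists_pow_apply_eq_append (hTne : T.Nonempty)
    (hl : ∀ g ∈ CayleyTr J, g ^ l = g ^ (l + 1)) (hF : F ∈ Cayley S) {w : List S}
    (hw : w ∈ wordsOver (T ∪ J)) : ∃ u ∈ wordsOver J, ∃ v ∈ wordsOver T, (F ^ l) w = u ++ v := by
  cases l with
  | zero =>
    have hJ : J = ∅ :=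
      eq_empty_of_forall_cayleyTr_eq_one hT hdisj hTne fun g hg => by simpa using (hl g hg).symm
    refine ⟨[], by simp [wordsOver], w, fun x hx => ?_, rfl⟩
    simpa [hJ] using hw x hx
  | succ l =>
    rw [pow_succ']
    exact Cayley.exists_apply_eq_append hT hTJ hF ((Cayley.mapsTo_wordsOver hTJ hF).iterate l hw)

theorem Cayley.pow_add_apply_eq_pow_succ_apply {n : ℕ} (hTne : T.Nonempty)
    (hn : ∀ f ∈ CayleyOn T, f ^ n = f ^ (n + 1)) (hl : ∀ g ∈ CayleyTr J, g ^ l = g ^ (l + 1))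
    (hF : F ∈ Cayley S) {w : List S} (hw : w ∈ wordsOver (T ∪ J)) :
    (F ^ (n + l)) w = (F ^ (n + l + 1)) w := by
  obtain ⟨u, hu, v, hv, hFlw⟩ := Cayley.exists_pow_apply_eq_append hT hdisj hTJ hTne hl hF hw
  obtain ⟨F', hF', hFuv⟩ := Cayley.exists_apply_append hF u
  obtain ⟨G, hG, hFG⟩ := Cayley.exists_cayleyTr hT hdisj hTJ hF
  -- The trace of `(F ^ l) w` is fixed by `G`, and the trace records the `J`-prefix exactly.
  have hFu : F u = u := by
    have htr := map_pow_apply_of_eqOn (Cayley.mapsTo_wordsOver hTJ hF) hFG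
    have hstep : traceWord J ((F ^ (l + 1)) w) = traceWord J ((F ^ l) w) := by
      rw [htr _ hw, htr _ hw, ← hl G hG]
    rw [pow_succ'] at hstep
    change traceWord J (F ((F ^ l) w)) = _ at hstep
    simp only [hFlw, hFuv, traceWord, List.map_append] at hstep
    exact eq_of_traceWord_eq (List.append_inj hstep (by simp [Cayley.length_apply hF])).1 hu
  have hiter : ∀ m, (F ^ (m + l)) w = u ++ (F' ^ m) v := fun m => by
    rw [pow_add]
    change (F ^ m) ((F ^ l) w) = _
    rw [hFlw]
    refine (map_pow_apply_of_eqOn (Set.mapsTo_univ _ _) (fun x _ => ?_) m (Set.mem_univ v)).symm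
    change u ++ F' x = F (u ++ x)
    rw [hFuv, hFu]
  obtain ⟨f, hf, hfF'⟩ := Cayley.exists_cayleyOn hT hF'
  rw [add_right_comm, hiter, hiter, ← val_pow_apply hfF' n ⟨v, hv⟩,
    ← val_pow_apply hfF' (n + 1) ⟨v, hv⟩, hn f hf]

end Lift

end

theorem aperiodicity_lifts_general {S : Type*} [Monoid S]
    (T J : Set S)
    (hT : ∀ x ∈ T, ∀ s : S, s * x ∈ T ∧ x * s ∈ T) (hTne : T.Nonempty)
    (hdisj : Disjoint J T)
    (hTJ : ∀ x ∈ T ∪ J, ∀ s : S, s * x ∈ T ∪ J ∧ x * s ∈ T ∪ J)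
    (n l : ℕ)
    (hn : ∀ f ∈ CayleyOn T, f ^ n = f ^ (n + 1))
    (hl : ∀ g ∈ CayleyTr J, g ^ l = g ^ (l + 1)) :
    ∀ h ∈ CayleyOn (T ∪ J), h ^ (n + l) = h ^ (n + l + 1) := by
  intro h hh
  obtain ⟨F, hF, hhF⟩ := exists_cayley_of_mem_cayleyOn hTJ hh
  funext w
  apply Subtype.ext
  rw [val_pow_apply hhF, val_pow_apply hhF]
  exact Cayley.pow_add_apply_eq_pow_succ_apply hT hdisj hTJ hTne hn hl hF w.2

/-- Aperiodicity lifts through ideals: let S be a finite semigroup (with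
identity, as we may assume), T an ideal of S, and J a J-class directly above T
(i.e. T ∪ J is an ideal and J is disjoint from T).  If f^n = f^{n+1} for every
f ∈ Cayley(S,T) and g^l = g^{l+1} for every g ∈ Cayley(S,J^tr), then
h^{n+l} = h^{n+l+1} for every h ∈ Cayley(S, T ∪ J). -/
theorem aperiodicity_lifts {S : Type*} [Monoid S] [Fintype S]
    (T J : Set S)
    (hT : ∀ x ∈ T, ∀ s : S, s * x ∈ T ∧ x * s ∈ T) (hTne : T.Nonempty)
    (hJ : ∃ j ∈ J, J = {x | jrel x j})
    (hdisj : Disjoint J T)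
    (hTJ : ∀ x ∈ T ∪ J, ∀ s : S, s * x ∈ T ∪ J ∧ x * s ∈ T ∪ J)
    (n l : ℕ)
    (hn : ∀ f ∈ CayleyOn T, f ^ n = f ^ (n + 1))
    (hl : ∀ g ∈ CayleyTr J, g ^ l = g ^ (l + 1)) :
    ∀ h ∈ CayleyOn (T ∪ J), h ^ (n + l) = h ^ (n + l + 1) :=
  aperiodicity_lifts_general T J hT hTne hdisj hTJ n l hn hl
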